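/- Let $U_1, \dots, U_n$ be i.i.d. uniform random variables on $[0,1]$ with $n \geq 2$ and $0 \leq \delta \leq \frac{1}{n-1}$. Then $\mathbb{P}[\min_{1 \leq i < j \leq n} |U_i - U_j| \geq \delta] = (1-(n-1)\delta)^n$. -/

import Mathlib

/-!
Almost every point has pairwise distinct coordinates, so up to a null set `ℝⁿ` splits into the
`n!` chambers on which `u ∘ σ` is monotone. On the chamber of `σ`, subtracting `δ · rank i` from
the coordinate `u i` maps the `δ`-separated points of `[0,1]ⁿ` bijectively onto the points of
`[0, 1 - (n-1)δ]ⁿ` in the same chamber. Translations preserve volume, so summing over `σ` gives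
`(1 - (n-1)δ)ⁿ`.
-/

open MeasureTheory Set

lemma measure_setOf_not_injective_eq_zero {ι : Type*} [Fintype ι] (μ : Measure (ι → ℝ))
    [μ.IsAddHaarMeasure] : μ {v | ¬ Function.Injective v} = 0 := by
  classical
  let diag (i j : ι) : Submodule ℝ (ι → ℝ) :=
    LinearMap.ker (LinearMap.proj (R := ℝ) (φ := fun _ : ι => ℝ) i - LinearMap.proj j)
  have hsub : {v : ι → ℝ | ¬ Function.Injective v} ⊆ ⋃ (i) (j) (_ : i ≠ j), (diag i j : Set _) := by
    intro v hv
    simp only [Function.Injective, not_forall] at hv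
    obtain ⟨i, j, hv, hij⟩ := hv
    simp only [mem_iUnion]
    exact ⟨i, j, hij, by simp [diag, hv]⟩
  refine measure_mono_null hsub (measure_iUnion_null fun i => measure_iUnion_null fun j =>
    measure_iUnion_null fun hij => Measure.addHaar_submodule μ _ fun htop => ?_)
  have : Pi.single i (1 : ℝ) ∈ diag i j := htop ▸ Submodule.mem_top
  simp [diag, hij.symm] at this

lemma isClosed_setOf_monotone_comp {n : ℕ} (σ : Equiv.Perm (Fin n)) :
    IsClosed {v : Fin n → ℝ | Monotone (v ∘ σ)} := by
  simp only [Monotone, ofPred_forall]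
  exact isClosed_iInter fun i => isClosed_iInter fun j => isClosed_iInter fun _ =>
    isClosed_le (by fun_prop) (by fun_prop)

lemma aedisjoint_setOf_monotone_comp {n : ℕ} (μ : Measure (Fin n → ℝ)) [μ.IsAddHaarMeasure]
    {σ τ : Equiv.Perm (Fin n)} (h : σ ≠ τ) :
    AEDisjoint μ {v | Monotone (v ∘ σ)} {v | Monotone (v ∘ τ)} := by
  refine measure_mono_null (fun v hστ => ?_) (measure_setOf_not_injective_eq_zero μ)
  obtain ⟨hσ, hτ⟩ := hστ
  refine fun hv => h ?_
  have eq_sort {π : Equiv.Perm (Fin n)} (hπ : Monotone (v ∘ π)) : π = Tuple.sort v :=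
    Tuple.eq_sort_iff.2 ⟨hπ, fun i j hij he => absurd (π.injective (hv he)) hij.ne⟩
  rw [eq_sort hσ, eq_sort hτ]

lemma measure_eq_sum_inter_setOf_monotone_comp {n : ℕ} (μ : Measure (Fin n → ℝ))
    [μ.IsAddHaarMeasure] {B : Set (Fin n → ℝ)} (hB : NullMeasurableSet B μ) :
    μ B = ∑ σ : Equiv.Perm (Fin n), μ (B ∩ {v | Monotone (v ∘ σ)}) := by
  have hcover : B = ⋃ σ : Equiv.Perm (Fin n), B ∩ {v | Monotone (v ∘ σ)} := by
    refine Subset.antisymm (fun v hv => ?_) (iUnion_subset fun σ => inter_subset_left)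
    exact mem_iUnion.2 ⟨Tuple.sort v, hv, Tuple.monotone_sort v⟩
  conv_lhs => rw [hcover]
  rw [measure_iUnion₀ _ fun σ => hB.inter (isClosed_setOf_monotone_comp σ).nullMeasurableSet,
    tsum_fintype]
  exact fun σ τ h => (aedisjoint_setOf_monotone_comp μ h).mono inter_subset_right inter_subset_right

lemma monotone_sub_mul_iff {n : ℕ} {δ : ℝ} (hδ : 0 ≤ δ) (w : Fin n → ℝ) :
    Monotone (fun k : Fin n => w k - δ * k) ↔
      Monotone w ∧ ∀ i j, i ≠ j → δ ≤ |w i - w j| := by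
  constructor
  · intro hg
    have gap {i j : Fin n} (hij : i ≤ j) : δ * (j - i : ℝ) ≤ w j - w i := by
      have := hg hij; simp only at this; linarith
    refine ⟨fun i j hij => ?_, fun i j hij => ?_⟩
    · have : (i : ℝ) ≤ j := by exact_mod_cast hij
      nlinarith [gap hij]
    · rcases hij.lt_or_gt with hij | hij
      · have : (i : ℝ) + 1 ≤ j := by exact_mod_cast hij
        rw [abs_sub_comm, abs_of_nonneg] <;> nlinarith [gap hij.le]
      · have : (j : ℝ) + 1 ≤ i := by exact_mod_cast hij
        rw [abs_of_nonneg] <;> nlinarith [gap hij.le]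
  · rintro ⟨hw, hsep⟩
    refine (monotone_iff_forall_covBy _).2 fun a b hab => ?_
    have hb : (b : ℝ) = a + 1 := by
      rw [Fin.covBy_iff, Nat.covBy_iff_add_one_eq] at hab; exact_mod_cast hab.symm
    have hle := hw hab.le
    have := hsep a b hab.lt.ne
    rw [abs_sub_comm, abs_of_nonneg (by linarith)] at this
    simp only [hb]
    linarith

lemma forall_add_mul_mem_Icc_iff {n : ℕ} {δ : ℝ} (hδ : 0 ≤ δ) {g : Fin n → ℝ}
    (hg : Monotone g) :
    (∀ k : Fin n, g k + δ * k ∈ Icc 0 1) ↔ ∀ k : Fin n, g k ∈ Icc 0 (1 - (n - 1) * δ) := by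
  have hk (k : Fin n) : (k : ℝ) ≤ n - 1 := by
    have : (k : ℝ) + 1 ≤ n := by exact_mod_cast k.isLt
    linarith
  constructor
  · intro h k
    have hn : 0 < n := k.pos
    have h0 := (h ⟨0, hn⟩).1
    have h1 := (h ⟨n - 1, by omega⟩).2
    have hcast : ((n - 1 : ℕ) : ℝ) = n - 1 := by rw [Nat.cast_sub hn, Nat.cast_one]
    simp only [hcast, CharP.cast_eq_zero, mul_zero, add_zero] at h0 h1
    have hfirst : g ⟨0, hn⟩ ≤ g k := hg (Fin.le_iff_val_le_val.2 (Nat.zero_le _))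
    have hlast : g k ≤ g ⟨n - 1, by omega⟩ := hg (Fin.le_iff_val_le_val.2 (by simp; omega))
    constructor <;> linarith
  · intro h k
    exact ⟨by nlinarith [(h k).1], by nlinarith [(h k).2, hk k]⟩

lemma isClosed_setOf_separated {ι : Type*} (δ : ℝ) :
    IsClosed {u : ι → ℝ | ∀ i j, i ≠ j → δ ≤ |u i - u j|} := by
  simp only [ofPred_forall]
  exact isClosed_iInter fun i => isClosed_iInter fun j => isClosed_iInter fun _ =>
    isClosed_le continuous_const (by fun_prop)

lemma separated_comp_perm_iff {n : ℕ} {δ : ℝ} (σ : Equiv.Perm (Fin n)) (u : Fin n → ℝ) :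
    (∀ i j, i ≠ j → δ ≤ |(u ∘ σ) i - (u ∘ σ) j|) ↔ ∀ i j, i ≠ j → δ ≤ |u i - u j| := by
  refine ⟨fun h i j hij => ?_, fun h i j hij => h _ _ (σ.injective.ne hij)⟩
  simpa using h (σ.symm i) (σ.symm j) (σ.symm.injective.ne hij)

lemma separated_cube_monotone_eq_preimage {n : ℕ} {δ : ℝ} (hδ : 0 ≤ δ)
    (σ : Equiv.Perm (Fin n)) :
    {u : Fin n → ℝ | ∀ i j, i ≠ j → δ ≤ |u i - u j|} ∩ univ.pi (fun _ => Icc 0 1) ∩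
        {u | Monotone (u ∘ σ)} =
      (· - fun i => δ * (σ.symm i : ℕ)) ⁻¹'
        (univ.pi (fun _ => Icc 0 (1 - (n - 1) * δ)) ∩ {v | Monotone (v ∘ σ)}) := by
  ext u
  have hshift : (u - fun i => δ * (σ.symm i : ℕ)) ∘ σ = fun k => (u ∘ σ) k - δ * k := by
    ext k; simp
  have hcube (v : Fin n → ℝ) (a b : ℝ) :
      v ∈ univ.pi (fun _ => Icc a b) ↔ ∀ k, (v ∘ σ) k ∈ Icc a b := by
    simp only [mem_univ_pi, Function.comp_apply]
    exact σ.forall_congr_right.symm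
  simp only [mem_inter_iff, mem_preimage, mem_ofPred_eq, hcube, ← separated_comp_perm_iff σ u,
    hshift]
  rw [monotone_sub_mul_iff hδ]
  constructor
  · rintro ⟨⟨hsep, hunit⟩, hmono⟩
    have hg := (monotone_sub_mul_iff hδ _).2 ⟨hmono, hsep⟩
    exact ⟨(forall_add_mul_mem_Icc_iff hδ hg).1 (by simpa using hunit), hmono, hsep⟩
  · rintro ⟨hshifted, hmono, hsep⟩
    have hg := (monotone_sub_mul_iff hδ _).2 ⟨hmono, hsep⟩
    exact ⟨⟨hsep, by simpa using (forall_add_mul_mem_Icc_iff hδ hg).2 hshifted⟩, hmono⟩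

theorem min_spacing_uniform_general (n : ℕ) (δ : ℝ) (hδ0 : 0 ≤ δ)
    (hδ1 : δ ≤ 1 / (n - 1 : ℝ)) :
    (Measure.pi fun _ : Fin n => volume.restrict (Set.Icc (0 : ℝ) 1))
      {u : Fin n → ℝ | ∀ i j : Fin n, i ≠ j → δ ≤ |u i - u j|} =
      ENNReal.ofReal ((1 - (n - 1 : ℝ) * δ) ^ n) := by
  have hs : 0 ≤ 1 - (n - 1 : ℝ) * δ := by
    rcases le_or_gt (n - 1 : ℝ) 0 with hn | hn
    · nlinarith
    · rw [le_div_iff₀ hn] at hδ1; linarith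
  have hcube (b : ℝ) : MeasurableSet (univ.pi fun _ : Fin n => Icc (0 : ℝ) b) :=
    MeasurableSet.univ_pi fun _ => measurableSet_Icc
  calc _ = volume ({u : Fin n → ℝ | ∀ i j : Fin n, i ≠ j → δ ≤ |u i - u j|} ∩
          univ.pi fun _ => Icc 0 1) := by
        rw [← Measure.restrict_pi_pi, ← volume_pi, Measure.restrict_apply' (hcube 1)]
    _ = ∑ σ : Equiv.Perm (Fin n), volume ({u : Fin n → ℝ | ∀ i j, i ≠ j → δ ≤ |u i - u j|} ∩
          univ.pi (fun _ => Icc 0 1) ∩ {u | Monotone (u ∘ σ)}) :=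
        measure_eq_sum_inter_setOf_monotone_comp volume
          ((isClosed_setOf_separated δ).measurableSet.inter (hcube 1)).nullMeasurableSet
    _ = ∑ σ : Equiv.Perm (Fin n), volume (univ.pi (fun _ => Icc 0 (1 - (n - 1 : ℝ) * δ)) ∩
          {v : Fin n → ℝ | Monotone (v ∘ σ)}) := by
        refine Finset.sum_congr rfl fun σ _ => ?_
        rw [separated_cube_monotone_eq_preimage hδ0]
        -- `(· - c)` unfolds to `(· + -c)`
        exact measure_preimage_add_right _ _ _
    _ = volume (univ.pi fun _ : Fin n => Icc 0 (1 - (n - 1 : ℝ) * δ)) :=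
        (measure_eq_sum_inter_setOf_monotone_comp volume (hcube _).nullMeasurableSet).symm
    _ = _ := by
        rw [volume_pi_pi]
        simp [Real.volume_Icc, ENNReal.ofReal_pow hs]

theorem min_spacing_uniform (n : ℕ) (hn : 2 ≤ n) (δ : ℝ) (hδ0 : 0 ≤ δ)
    (hδ1 : δ ≤ 1 / (n - 1 : ℝ)) :
    (Measure.pi fun _ : Fin n => volume.restrict (Set.Icc (0 : ℝ) 1))
      {u : Fin n → ℝ | ∀ i j : Fin n, i ≠ j → δ ≤ |u i - u j|} =
      ENNReal.ofReal ((1 - (n - 1 : ℝ) * δ) ^ n) :=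
  min_spacing_uniform_general n δ hδ0 hδ1
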